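/- For real numbers 0 < σ₀ ≤ 1/2, a fixed real t₀, and an integer N ≥ 2, the sum over n from 1 to N of the integral of n^{-s} ds along the horizontal segment from σ₀ + it₀ to 1 − σ₀ + it₀ has absolute value at most (N^{1−σ₀} − N^{σ₀})/(σ₀ · log N). -/

import Mathlib

/-!
Since `‖n ^ (-s)‖ = n ^ (-Re s)`, comparing with `∫₁ᴺ x ^ (-σ) dx` bounds the norm of the partial
sum `∑_{n ≤ N} n ^ (-s)` at `Re s = σ` by `N ^ (1 - σ) / (1 - σ) ≤ N ^ (1 - σ) / σ₀` on the segment.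
Integrating this bound over `σ₀ ≤ σ ≤ 1 - σ₀` gives `(N ^ (1 - σ₀) - N ^ σ₀) / (σ₀ log N)`.
-/

open Complex Real

theorem sum_Icc_one_rpow_neg_le {σ : ℝ} (h0 : 0 ≤ σ) (h1 : σ < 1) (N : ℕ) :
    ∑ n ∈ Finset.Icc 1 N, (n : ℝ) ^ (-σ) ≤ (N : ℝ) ^ (1 - σ) / (1 - σ) := by
  have hσ : 0 < 1 - σ := by linarith
  rcases N with _ | M
  · simp [Real.zero_rpow hσ.ne']
  have hanti : AntitoneOn (fun x : ℝ => x ^ (-σ)) (Set.Icc 1 (1 + M)) := fun x hx y _ hxy =>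
    Real.rpow_le_rpow_of_nonpos (by linarith [hx.1]) hxy (by linarith)
  have htail := hanti.sum_le_integral
  rw [integral_rpow (Or.inl (by linarith)), Real.one_rpow, neg_add_eq_sub, add_comm (1 : ℝ)]
    at htail
  have hsplit : ∑ n ∈ Finset.Icc 1 (M + 1), (n : ℝ) ^ (-σ) =
      ∑ i ∈ Finset.range M, ((1 : ℝ) + ↑(i + 1)) ^ (-σ) + 1 := by
    rw [← Finset.Ico_add_one_right_eq_Icc, ← Finset.sum_Ico_add' _ 0 (M + 1) 1,
      ← Finset.range_eq_Ico, Finset.sum_range_succ']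
    simp [add_comm]
  have hone : 1 ≤ 1 / (1 - σ) := by rw [le_div_iff₀ hσ]; linarith
  rw [hsplit, Nat.cast_succ]
  calc _ ≤ (((M : ℝ) + 1) ^ (1 - σ) - 1) / (1 - σ) + 1 / (1 - σ) := by gcongr
    _ = _ := by ring

theorem norm_sum_Icc_one_natCast_cpow_neg_le {s : ℂ} (h0 : 0 ≤ s.re) (h1 : s.re < 1) (N : ℕ) :
    ‖∑ n ∈ Finset.Icc 1 N, (n : ℂ) ^ (-s)‖ ≤ (N : ℝ) ^ (1 - s.re) / (1 - s.re) := by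
  refine (norm_sum_le _ _).trans (le_of_eq_of_le (Finset.sum_congr rfl fun n hn => ?_)
    (sum_Icc_one_rpow_neg_le h0 h1 N))
  rw [norm_natCast_cpow_of_pos (Finset.mem_Icc.mp hn).1, neg_re]

theorem integral_const_rpow {B : ℝ} (hB : 0 < B) (hB1 : B ≠ 1) (a b : ℝ) :
    ∫ x in a..b, B ^ x = (B ^ b - B ^ a) / Real.log B := by
  have hlog : Real.log B ≠ 0 := Real.log_ne_zero_of_pos_of_ne_one hB hB1
  have hderiv : ∀ x ∈ Set.uIcc a b, HasDerivAt (fun x => B ^ x / Real.log B) (B ^ x) x :=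
    fun x _ => by
      simpa [hlog] using ((Real.hasStrictDerivAt_const_rpow hB x).hasDerivAt.div_const (Real.log B))
  rw [intervalIntegral.integral_eq_sub_of_hasDerivAt hderiv
    ((Real.continuous_const_rpow hB.ne').intervalIntegrable _ _), sub_div]

theorem sum_integral_bound (σ₀ t₀ : ℝ) (h1 : 0 < σ₀) (h2 : σ₀ ≤ 1 / 2)
    (N : ℕ) (hN : 2 ≤ N) :
    ‖∑ n ∈ Finset.Icc 1 N,
        ∫ σ in σ₀..(1 - σ₀), (n : ℂ) ^ (-((σ : ℂ) + (t₀ : ℂ) * Complex.I))‖ ≤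
      ((N : ℝ) ^ (1 - σ₀) - (N : ℝ) ^ σ₀) / (σ₀ * Real.log N) := by
  have hNpos : (0 : ℝ) < N := Nat.cast_pos.mpr (by omega)
  have hN1 : (N : ℝ) ≠ 1 := by norm_cast; omega
  have hintegrable (n : ℕ) (hn : n ∈ Finset.Icc 1 N) :
      IntervalIntegrable (fun σ : ℝ => (n : ℂ) ^ (-((σ : ℂ) + (t₀ : ℂ) * Complex.I)))
        MeasureTheory.volume σ₀ (1 - σ₀) := by
    have hn0 : (n : ℂ) ≠ 0 := by simp only [Finset.mem_Icc] at hn; norm_cast; omega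
    exact (Continuous.const_cpow (by fun_prop) (Or.inl hn0)).intervalIntegrable _ _
  have hmajorant : Continuous fun σ : ℝ => (N : ℝ) ^ (1 - σ) / σ₀ := by
    fun_prop (disch := positivity)
  have hpointwise : ∀ σ ∈ Set.Ioc σ₀ (1 - σ₀),
      ‖∑ n ∈ Finset.Icc 1 N, (n : ℂ) ^ (-((σ : ℂ) + (t₀ : ℂ) * Complex.I))‖ ≤
        (N : ℝ) ^ (1 - σ) / σ₀ := fun σ hσ => by
    have hre : ((σ : ℂ) + t₀ * Complex.I).re = σ := by simp
    have h := norm_sum_Icc_one_natCast_cpow_neg_le (s := σ + t₀ * Complex.I)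
      (by rw [hre]; linarith [hσ.1]) (by rw [hre]; linarith [hσ.2]) N
    rw [hre] at h
    exact h.trans (div_le_div_of_nonneg_left (by positivity) h1 (by linarith [hσ.2]))
  rw [← intervalIntegral.integral_finsetSum hintegrable]
  calc _ ≤ ∫ σ in σ₀..(1 - σ₀), (N : ℝ) ^ (1 - σ) / σ₀ :=
        intervalIntegral.norm_integral_le_of_norm_le (by linarith)
          (Filter.Eventually.of_forall hpointwise)
          (hmajorant.intervalIntegrable _ _)
    _ = _ := by
      rw [intervalIntegral.integral_div,
        intervalIntegral.integral_comp_sub_left (fun σ => (N : ℝ) ^ σ),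
        integral_const_rpow hNpos hN1, sub_sub_cancel, div_div, mul_comm]
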